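/- arXiv:2205.00984 — 4 statements merged into one kernel-verified Lean document; each statement's English description precedes it below -/
import Mathlib

section
/- Let A be a random variable supported on a finite set of size A with Shannon entropy H(A) ≥ log A − γ for some γ ≥ 0. Then for any subset S of the support with |S| = βA for some β < 1, the probability that A lands in S satisfies Pr(A ∈ S) ≤ log(1 + β) + γ. -/
open Finset

/-- Shannon entropy (base 2) of a distribution on a finite type. -/
noncomputable def ent {α : Type*} [Fintype α] (p : α → ℝ) : ℝ :=
  -∑ i, p i * Real.logb 2 (p i)

set_option maxHeartbeats 1000000 in
theorem high_entropy_bounded_mass {α : Type*} [Fintype α] (p : α → ℝ)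
    (hp0 : ∀ i, 0 ≤ p i) (hp1 : ∑ i, p i = 1)
    (γ β : ℝ) (hγ : 0 ≤ γ) (hβ : β < 1)
    (hent : Real.logb 2 (Fintype.card α) - γ ≤ ent p)
    (S : Finset α) (hS : (S.card : ℝ) = β * Fintype.card α) :
    ∑ i ∈ S, p i ≤ Real.logb 2 (1 + β) + γ := by
  classical
  have hL : (0:ℝ) < Real.log 2 := Real.log_pos (by norm_num)
  -- nonempty
  have hcard : 0 < Fintype.card α := by
    by_contra h
    push_neg at h
    interval_cases h' : Fintype.card α
    · have : IsEmpty α := Fintype.card_eq_zero_iff.mp h'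
      simp [Finset.univ_eq_empty] at hp1
  have hA0 : (0:ℝ) < Fintype.card α := by exact_mod_cast hcard
  set A : ℝ := (Fintype.card α : ℝ) with hAdef
  have hβ0 : 0 ≤ β := by
    have h1 : (0:ℝ) ≤ S.card := Nat.cast_nonneg _
    nlinarith
  have h1β : (0:ℝ) < 1 + β := by linarith
  set a : ℝ := 2 / ((1 + β) * A) with hadef
  set b : ℝ := 1 / ((1 + β) * A) with hbdef
  have hapos : 0 < a := by positivity
  have hbpos : 0 < b := by positivity
  set r : α → ℝ := fun i => if i ∈ S then a else b with hrdef
  have hrpos : ∀ i, 0 < r i := by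
    intro i; simp only [hrdef]; split <;> assumption
  -- sum of r is 1
  have hScardc : ((Sᶜ : Finset α).card : ℝ) = A - β * A := by
    rw [Finset.card_compl, Nat.cast_sub S.card_le_univ]
    simp [hS, hAdef]
  have hrsum : ∑ i, r i = 1 := by
    rw [← Finset.sum_add_sum_compl S]
    have e1 : ∑ i ∈ S, r i = (S.card : ℝ) * a := by
      simp [hrdef, Finset.sum_ite_of_true, mul_comm]
    have e2 : ∑ i ∈ Sᶜ, r i = ((Sᶜ : Finset α).card : ℝ) * b := by
      rw [Finset.sum_congr rfl (fun i hi => ?_), Finset.sum_const, nsmul_eq_mul]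
      simp only [hrdef]
      rw [if_neg (Finset.mem_compl.mp hi)]
    rw [e1, e2, hS, hScardc, hadef, hbdef]
    field_simp
    ring
  set q : ℝ := ∑ i ∈ S, p i with hqdef
  have hqc : ∑ i ∈ Sᶜ, p i = 1 - q := by
    have := Finset.sum_add_sum_compl S p
    rw [hp1] at this
    linarith
  -- Gibbs inequality
  have gibbs : ∑ i, p i * Real.log (r i) ≤ ∑ i, p i * Real.log (p i) := by
    have key : ∀ i ∈ Finset.univ, p i * Real.log (r i) - p i * Real.log (p i) ≤ r i - p i := by
      intro i _
      rcases eq_or_lt_of_le (hp0 i) with h | h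
      · simp [← h]
        exact le_of_lt (hrpos i)
      · have hlog := Real.log_le_sub_one_of_pos (show 0 < r i / p i by positivity)
        rw [Real.log_div (ne_of_gt (hrpos i)) (ne_of_gt h)] at hlog
        have h3 : p i * (r i / p i - 1) = r i - p i := by field_simp
        nlinarith [mul_le_mul_of_nonneg_left hlog (hp0 i)]
    have := Finset.sum_le_sum key
    rw [Finset.sum_sub_distrib] at this
    have hsr : ∑ i, (r i - p i) = 0 := by
      rw [Finset.sum_sub_distrib, hrsum, hp1]; ring
    linarith
  -- compute ∑ p log r
  have hplr : ∑ i, p i * Real.log (r i) = q * Real.log a + (1 - q) * Real.log b := by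
    rw [← Finset.sum_add_sum_compl S]
    congr 1
    · rw [Finset.sum_congr rfl (fun i hi => ?_), ← Finset.sum_mul]
      simp only [hrdef]
      rw [if_pos hi]
    · rw [Finset.sum_congr rfl (fun i hi => ?_), ← Finset.sum_mul, hqc]
      simp only [hrdef]
      rw [if_neg (Finset.mem_compl.mp hi)]
  have hloga : Real.log a = Real.log 2 - (Real.log (1 + β) + Real.log A) := by
    rw [hadef, Real.log_div (by norm_num) (mul_pos h1β hA0).ne', Real.log_mul (ne_of_gt h1β) (ne_of_gt hA0)]
  have hlogb : Real.log b = -(Real.log (1 + β) + Real.log A) := by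
    rw [hbdef, one_div, Real.log_inv, Real.log_mul (ne_of_gt h1β) (ne_of_gt hA0)]
  -- rewrite entropy hypothesis in natural logs
  have hentval : ent p = (-∑ i, p i * Real.log (p i)) / Real.log 2 := by
    unfold ent
    simp only [Real.logb, ← mul_div_assoc]
    rw [← Finset.sum_div, neg_div]
  have hlogbA : Real.logb 2 A = Real.log A / Real.log 2 := rfl
  rw [hentval, hlogbA] at hent
  have hent' : Real.log A - γ * Real.log 2 ≤ -∑ i, p i * Real.log (p i) := by
    have h := mul_le_mul_of_nonneg_right hent hL.le
    rw [sub_mul, div_mul_cancel₀ _ hL.ne', div_mul_cancel₀ _ hL.ne'] at h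
    linarith
  -- combine
  have hfinal : q * Real.log 2 ≤ Real.log (1 + β) + γ * Real.log 2 := by
    have h1 : -∑ i, p i * Real.log (p i) ≤ -(q * Real.log a + (1 - q) * Real.log b) := by
      rw [← hplr]; linarith
    rw [hloga, hlogb] at h1
    nlinarith [hent']
  have hlb : Real.logb 2 (1 + β) * Real.log 2 = Real.log (1 + β) := by
    rw [Real.logb]; field_simp
  nlinarith [hfinal, hlb, hL]
end

section
/- If Y is a Bernoulli random variable with parameter p whose binary entropy satisfies H(Y) ≥ 1 − γ for some 0 ≤ γ ≤ 1/4, then |p − 1/2| ≤ √(5γ·ln(4)/16). -/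
/-!
The relative entropy of `Bernoulli(p)` to the fair coin is `log 2 - binEntropy p` nats, and
Pinsker's inequality bounds it below by `2 (p - 1/2)²`. An entropy deficit of at most `γ` bits
therefore gives `2 (p - 1/2)² ≤ γ log 2`, which is stronger than the claimed bound.
Pinsker's inequality itself follows by monotonicity on `[1/2, 1]`: the derivative of the gap is
`log (1 + x) - log (1 - x) - 2x` with `x = 2p - 1`, nonnegative because the power series of
`log (1 + x) - log (1 - x)` has nonnegative coefficients and leading term `2x`.
-/

open Real Set

namespace Real

lemma two_mul_le_log_one_add_sub_log_one_sub {x : ℝ} (hx₀ : 0 ≤ x) (hx₁ : x < 1) :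
    2 * x ≤ log (1 + x) - log (1 - x) := by
  have hs := hasSum_log_sub_log_of_abs_lt_one (x := x) (by rwa [abs_of_nonneg hx₀])
  simpa using le_hasSum hs 0 fun k _ => by positivity

lemma hasDerivAt_log_two_sub_sq_sub_binEntropy {p : ℝ} (hp₀ : p ≠ 0) (hp₁ : p ≠ 1) :
    HasDerivAt (fun q => log 2 - 2 * (q - 2⁻¹) ^ 2 - binEntropy q)
      (log p - log (1 - p) - 4 * (p - 2⁻¹)) p := by
  have := ((((hasDerivAt_id' p).sub_const 2⁻¹).pow 2).const_mul 2).const_sub (log 2)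
    |>.fun_sub (hasDerivAt_binEntropy hp₀ hp₁)
  exact this.congr_deriv (by ring)

lemma monotoneOn_log_two_sub_sq_sub_binEntropy :
    MonotoneOn (fun q => log 2 - 2 * (q - 2⁻¹) ^ 2 - binEntropy q) (Icc 2⁻¹ 1) := by
  have hderiv (p : ℝ) (hp : p ∈ Ioo 2⁻¹ 1) :=
    hasDerivAt_log_two_sub_sq_sub_binEntropy (by linarith [hp.1]) hp.2.ne
  refine monotoneOn_of_deriv_nonneg (convex_Icc _ _) (by fun_prop) ?_ ?_ <;> rw [interior_Icc]
  · exact fun p hp => (hderiv p hp).differentiableAt.differentiableWithinAt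
  · intro p hp
    rw [(hderiv p hp).deriv]
    have hseries := two_mul_le_log_one_add_sub_log_one_sub (x := 2 * p - 1)
      (by linarith [hp.1]) (by linarith [hp.2])
    have hplus : log (1 + (2 * p - 1)) = log 2 + log p := by
      rw [show 1 + (2 * p - 1) = 2 * p by ring, log_mul two_ne_zero (by linarith [hp.1])]
    have hminus : log (1 - (2 * p - 1)) = log 2 + log (1 - p) := by
      rw [show 1 - (2 * p - 1) = 2 * (1 - p) by ring, log_mul two_ne_zero (by linarith [hp.2])]
    linarith

lemma binEntropy_le_log_two_sub_two_mul_sq {p : ℝ} (hp₀ : 0 ≤ p) (hp₁ : p ≤ 1) :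
    binEntropy p ≤ log 2 - 2 * (p - 2⁻¹) ^ 2 := by
  wlog hp : 2⁻¹ ≤ p generalizing p
  · have h := this (p := 1 - p) (by linarith) (by linarith) (by linarith)
    rw [binEntropy_one_sub] at h
    linarith [show (1 - p - 2⁻¹) ^ 2 = (p - 2⁻¹) ^ 2 by ring]
  have := monotoneOn_log_two_sub_sq_sub_binEntropy ⟨le_rfl, by norm_num⟩ ⟨hp, hp₁⟩ hp
  simp only [sub_self, ne_eq, OfNat.ofNat_ne_zero, not_false_eq_true, zero_pow, mul_zero,
    sub_zero, binEntropy_two_inv] at this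
  linarith

lemma binEntropy_div_log_two (p : ℝ) :
    binEntropy p / log 2 = p * logb 2 p⁻¹ + (1 - p) * logb 2 (1 - p)⁻¹ := by
  simp only [binEntropy, logb]
  ring

end Real

theorem bern_high_entropy_param_general (p γ : ℝ) (hp0 : 0 ≤ p) (hp1 : p ≤ 1)
    (hent : 1 - γ ≤ p * Real.logb 2 p⁻¹ + (1 - p) * Real.logb 2 (1 - p)⁻¹) :
    |p - 1 / 2| ≤ Real.sqrt (5 * γ * Real.log 4 / 16) := by
  have hentropy : (1 - γ) * log 2 ≤ binEntropy p := by
    rwa [← binEntropy_div_log_two, le_div_iff₀ (log_pos one_lt_two)] at hent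
  have hpinsker := binEntropy_le_log_two_sub_two_mul_sq hp0 hp1
  have hlog4 : log 4 = 2 * log 2 := by
    rw [show (4 : ℝ) = 2 ^ 2 by norm_num, log_pow, Nat.cast_ofNat]
  apply abs_le_sqrt
  rw [hlog4]
  linarith [sq_nonneg (p - 2⁻¹)]

theorem bern_high_entropy_param (p γ : ℝ) (hp0 : 0 ≤ p) (hp1 : p ≤ 1)
    (hγ0 : 0 ≤ γ) (hγ : γ ≤ 1 / 4)
    (hent : 1 - γ ≤ p * Real.logb 2 p⁻¹ + (1 - p) * Real.logb 2 (1 - p)⁻¹) :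
    |p - 1 / 2| ≤ Real.sqrt (5 * γ * Real.log 4 / 16) :=
  bern_high_entropy_param_general p γ hp0 hp1 hent
end

section
/- For any p ∈ [0,1], the binary entropy in bits satisfies H₂(p) ≤ (4p(1−p))^(1/ln 4). -/
/-!
Measure entropy in nats and write `Q = 4p(1-p)`, `κ = 1 / ln 4`, `L = ln ((1-p)/p)`. By symmetry
it suffices to show `F = ln 2 · Q^κ - H ≥ 0` on `[0, 1/2]`, where `F` vanishes at both ends; since
`ln 2 · κ = 1/2`, `F' = 2(1-2p) Q^(κ-1) - L`, so it is enough that `F'` changes sign exactly once,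
from `+` to `-`. The sign of `F'` is that of `Ψ = ln (2(1-2p) Q^(κ-1)) - ln L`, and going down the
chain of derivatives, `Ψ'`, `V'` and `U'` have the signs of `V`, `U` and `K - (1-2p) L` for
explicit `U`, `V` and a constant `K`, where `(1-2p) L` is decreasing. Going back up, each of `U`,
`V`, `Ψ` changes sign exactly once on `(0, 1/2)`: it is monotone on both sides of the sign change
of its derivative, tends to `0` at `1/2`, and has the right sign at one explicit point near `0`.
-/

open Real Set Filter Topology

section SignChange

variable {f f' : ℝ → ℝ} {a b m : ℝ}

theorem exists_pos_neg_of_deriv_neg_pos (hf : ∀ x ∈ Ioo a b, HasDerivAt f (f' x) x)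
    (hm : m ∈ Ioo a b) (hneg : ∀ x ∈ Ioo a m, f' x < 0) (hpos : ∀ x ∈ Ioo m b, 0 < f' x)
    (hlim : Tendsto f (𝓝[<] b) (𝓝 0)) {x₀ : ℝ} (hx₀ : x₀ ∈ Ioo a b) (hfx₀ : 0 < f x₀) :
    ∃ z ∈ Ioo x₀ b, (∀ x ∈ Ioo a z, 0 < f x) ∧ ∀ x ∈ Ioo z b, f x < 0 := by
  have hcont : ContinuousOn f (Ioo a b) := fun x hx => (hf x hx).continuousAt.continuousWithinAt
  have anti : StrictAntiOn f (Ioc a m) :=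
    strictAntiOn_of_deriv_neg (convex_Ioc a m)
      (hcont.mono (Ioc_subset_Ioo_right hm.2)) fun x hx => by
        rw [interior_Ioc] at hx
        rw [(hf x (Ioo_subset_Ioo_right hm.2.le hx)).deriv]
        exact hneg x hx
  have mono : StrictMonoOn f (Ico m b) :=
    strictMonoOn_of_deriv_pos (convex_Ico m b)
      (hcont.mono (Ico_subset_Ioo_left hm.1)) fun x hx => by
        rw [interior_Ico] at hx
        rw [(hf x (Ioo_subset_Ioo_left hm.1.le hx)).deriv]
        exact hpos x hx
  have neg_right : ∀ x ∈ Ico m b, f x < 0 := by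
    intro x hx
    obtain ⟨y, hxy, hyb⟩ := exists_between hx.2
    have hy : y ∈ Ico m b := ⟨hx.1.trans hxy.le, hyb⟩
    have hfy : f y ≤ 0 := ge_of_tendsto hlim <| by
      filter_upwards [Ioo_mem_nhdsLT hyb] with t ht
      exact (mono hy ⟨hy.1.trans ht.1.le, ht.2⟩ ht.1).le
    exact (mono hx hy hxy).trans_le hfy
  have hx₀m : x₀ < m := by
    by_contra! h
    exact hfx₀.not_gt (neg_right x₀ ⟨h, hx₀.2⟩)
  obtain ⟨z, hz, hfz⟩ : (0 : ℝ) ∈ f '' Ioo x₀ m :=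
    intermediate_value_Ioo' hx₀m.le (hcont.mono (Icc_subset_Ioo hx₀.1 hm.2))
      ⟨neg_right m ⟨le_rfl, hm.2⟩, hfx₀⟩
  have hz_mem : z ∈ Ioc a m := ⟨hx₀.1.trans hz.1, hz.2.le⟩
  refine ⟨z, ⟨hz.1, hz.2.trans hm.2⟩, fun x hx => ?_, fun x hx => ?_⟩
  · exact hfz ▸ anti ⟨hx.1, hx.2.le.trans hz.2.le⟩ hz_mem hx.2
  · rcases le_or_gt x m with hxm | hxm
    · exact hfz ▸ anti hz_mem ⟨hz_mem.1.trans hx.1, hxm⟩ hx.1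
    · exact neg_right x ⟨hxm.le, hx.2⟩

theorem nonneg_of_deriv_pos_neg (hcont : ContinuousOn f (Icc a b))
    (hf : ∀ x ∈ Ioo a b, HasDerivAt f (f' x) x) (hm : m ∈ Icc a b)
    (hpos : ∀ x ∈ Ioo a m, 0 < f' x) (hneg : ∀ x ∈ Ioo m b, f' x < 0)
    (ha : 0 ≤ f a) (hb : 0 ≤ f b) : ∀ x ∈ Icc a b, 0 ≤ f x := by
  have mono : StrictMonoOn f (Icc a m) :=
    strictMonoOn_of_deriv_pos (convex_Icc a m) (hcont.mono (Icc_subset_Icc_right hm.2))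
      fun x hx => by
        rw [interior_Icc] at hx
        rw [(hf x (Ioo_subset_Ioo_right hm.2 hx)).deriv]
        exact hpos x hx
  have anti : StrictAntiOn f (Icc m b) :=
    strictAntiOn_of_deriv_neg (convex_Icc m b) (hcont.mono (Icc_subset_Icc_left hm.1))
      fun x hx => by
        rw [interior_Icc] at hx
        rw [(hf x (Ioo_subset_Ioo_left hm.1 hx)).deriv]
        exact hneg x hx
  intro x hx
  rcases le_total x m with hxm | hxm
  · exact ha.trans (mono.monotoneOn ⟨le_rfl, hm.1⟩ ⟨hx.1, hxm⟩ hx.1)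
  · exact hb.trans (anti.antitoneOn ⟨hxm, hx.2⟩ ⟨hm.2, le_rfl⟩ hx.2)

end SignChange

namespace BinEntropyBound

noncomputable def κ : ℝ := 1 / log 4

lemma log_two_mul_κ : log 2 * κ = 1 / 2 := by
  have : log 4 = 2 * log 2 := by
    rw [show (4 : ℝ) = 2 ^ 2 by norm_num, log_pow]; norm_num
  rw [κ, this]
  field_simp [(log_pos one_lt_two).ne']

lemma κ_pos : 0 < κ := by
  rw [κ]; exact one_div_pos.2 (log_pos (by norm_num))

lemma κ_mem : κ ∈ Ioo (2 / 3) (3 / 4) := by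
  have h := log_two_mul_κ
  have h₁ := log_two_gt_d9
  have h₂ := log_two_lt_d9
  constructor <;> nlinarith

lemma mul_one_sub_pos {p : ℝ} (h₀ : 0 < p) (h₁ : p < 1) : 0 < p * (1 - p) :=
  mul_pos h₀ (sub_pos.2 h₁)

noncomputable def L (p : ℝ) : ℝ := log (1 - p) - log p

noncomputable def A (p : ℝ) : ℝ := (1 - 2 * p) * L p

noncomputable def U (p : ℝ) : ℝ :=
  (2 - 2 * κ) * (1 - 2 * p) - (2 * κ - 1) * (4 * p * (1 - p)) * L p

noncomputable def V (p : ℝ) : ℝ := 1 - 2 * p - (1 - (2 * κ - 1) * (1 - 2 * p) ^ 2) * L p / 2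

noncomputable def Ψ (p : ℝ) : ℝ :=
  log (2 * (1 - 2 * p)) - log (L p) - (1 - κ) * log (4 * p * (1 - p))

noncomputable def F (p : ℝ) : ℝ := log 2 * (4 * p * (1 - p)) ^ κ - binEntropy p

lemma hasDerivAt_one_sub_two_mul (p : ℝ) : HasDerivAt (fun x => 1 - 2 * x) (-2) p := by
  simpa using ((hasDerivAt_id p).const_mul 2).const_sub 1

lemma hasDerivAt_four_mul_mul_one_sub (p : ℝ) :
    HasDerivAt (fun x => 4 * x * (1 - x)) (4 * (1 - 2 * p)) p := by
  have h := ((hasDerivAt_id p).const_mul 4).mul ((hasDerivAt_id p).const_sub 1)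
  simp only [id, mul_one] at h
  exact h.congr_deriv (by ring)

section Derivatives

variable {p : ℝ} (h₀ : 0 < p) (h₁ : p < 1)
include h₀ h₁

lemma hasDerivAt_L : HasDerivAt L (-1 / (p * (1 - p))) p := by
  have h := ((hasDerivAt_id p).const_sub 1).log (sub_ne_zero.2 h₁.ne') |>.sub
    ((hasDerivAt_id p).log h₀.ne')
  refine h.congr_deriv ?_
  simp only [id]
  field_simp [h₀.ne', sub_ne_zero.2 h₁.ne']
  ring

lemma hasDerivAt_A : HasDerivAt A (-2 * L p - (1 - 2 * p) / (p * (1 - p))) p :=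
  ((hasDerivAt_one_sub_two_mul p).mul (hasDerivAt_L h₀ h₁)).congr_deriv (by ring)

lemma hasDerivAt_U : HasDerivAt U (12 * κ - 8 - (8 * κ - 4) * A p) p := by
  have h := ((hasDerivAt_one_sub_two_mul p).const_mul (2 - 2 * κ)).sub
    (((hasDerivAt_four_mul_mul_one_sub p).const_mul (2 * κ - 1)).mul (hasDerivAt_L h₀ h₁))
  refine h.congr_deriv ?_
  rw [A]
  field_simp [h₀.ne', sub_ne_zero.2 h₁.ne']
  ring

lemma hasDerivAt_V : HasDerivAt V ((1 - 2 * p) * U p / (2 * (p * (1 - p)))) p := by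
  have hX := hasDerivAt_one_sub_two_mul p
  have h := hX.sub ((((hX.pow 2).const_mul (2 * κ - 1)).const_sub 1).mul
    (hasDerivAt_L h₀ h₁) |>.div_const 2)
  refine h.congr_deriv ?_
  rw [U, Pi.pow_apply]
  field_simp [h₀.ne', sub_ne_zero.2 h₁.ne']
  ring

lemma hasDerivAt_F : HasDerivAt F (2 * (1 - 2 * p) * (4 * p * (1 - p)) ^ (κ - 1) - L p) p := by
  have hQ_pos : 0 < 4 * p * (1 - p) := by nlinarith
  have h := (((hasDerivAt_four_mul_mul_one_sub p).rpow_const (p := κ)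
    (Or.inl hQ_pos.ne')).const_mul (log 2)).sub (hasDerivAt_binEntropy h₀.ne' h₁.ne)
  refine h.congr_deriv ?_
  rw [L]
  linear_combination 4 * (1 - 2 * p) * (4 * p * (1 - p)) ^ (κ - 1) * log_two_mul_κ

end Derivatives

lemma L_pos {p : ℝ} (h₀ : 0 < p) (h₂ : p < 1 / 2) : 0 < L p :=
  sub_pos.2 (log_lt_log h₀ (by linarith))

lemma hasDerivAt_Ψ {p : ℝ} (h₀ : 0 < p) (h₂ : p < 1 / 2) :
    HasDerivAt Ψ (V p / ((1 - 2 * p) * (p * (1 - p)) * L p)) p := by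
  have hL := L_pos h₀ h₂
  have h := (((hasDerivAt_one_sub_two_mul p).const_mul 2).log (by linarith)).sub
    ((hasDerivAt_L h₀ (by linarith)).log hL.ne') |>.sub
    (((hasDerivAt_four_mul_mul_one_sub p).log (by nlinarith)).const_mul (1 - κ))
  refine h.congr_deriv ?_
  rw [V]
  field_simp [h₀.ne', (by linarith : (1 : ℝ) - p ≠ 0), (by linarith : (1 : ℝ) - 2 * p ≠ 0)]
  ring

lemma L_eq_log_div {p : ℝ} (h₀ : 0 < p) (h₁ : p < 1) : L p = log ((1 - p) / p) :=
  (log_div (by linarith) h₀.ne').symm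

lemma L_half : L (1 / 2) = 0 := by norm_num [L]

lemma A_strictAntiOn : StrictAntiOn A (Ioc 0 (1 / 2)) := by
  refine strictAntiOn_of_deriv_neg (convex_Ioc 0 (1 / 2))
    (fun x hx => (hasDerivAt_A hx.1 (by linarith [hx.2])).continuousAt.continuousWithinAt)
    fun x hx => ?_
  rw [interior_Ioc] at hx
  rw [(hasDerivAt_A hx.1 (by linarith [hx.2])).deriv]
  have : 0 < (1 - 2 * x) / (x * (1 - x)) :=
    div_pos (by linarith [hx.2]) (mul_one_sub_pos hx.1 (by linarith [hx.2]))
  linarith [L_pos hx.1 hx.2]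

lemma exists_A_eq : ∃ m ∈ Ioo (1 / 4 : ℝ) (1 / 2), A m = (12 * κ - 8) / (8 * κ - 4) := by
  obtain ⟨hκ₁, hκ₂⟩ := κ_mem
  have hA : ContinuousOn A (Icc (1 / 4) (1 / 2)) := fun x hx =>
    (hasDerivAt_A (by linarith [hx.1]) (by linarith [hx.2])).continuousAt.continuousWithinAt
  have hA_half : A (1 / 2) = 0 := by rw [A, L_half, mul_zero]
  have hA_quarter : A (1 / 4) = log 3 / 2 := by
    rw [A, L_eq_log_div (by norm_num) (by norm_num)]; norm_num; ring
  refine intermediate_value_Ioo' (by norm_num) hA ⟨?_, ?_⟩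
  · rw [hA_half, lt_div_iff₀ (by linarith)]; linarith
  · rw [hA_quarter, div_lt_iff₀ (by linarith)]; nlinarith [log_three_gt_d9]

lemma L_hundredth : L (1 / 100) = log 99 := by
  rw [L_eq_log_div (by norm_num) (by norm_num)]; norm_num

lemma log_ninety_nine_mem : log 99 ∈ Ioo 4 5 := by
  have h₆ : log (2 ^ 6 : ℝ) < log 99 := log_lt_log (by norm_num) (by norm_num)
  have h₇ : log 99 < log (2 ^ 7 : ℝ) := log_lt_log (by norm_num) (by norm_num)
  rw [log_pow] at h₆ h₇
  constructor <;> push_cast at h₆ h₇ <;> linarith [log_two_gt_d9, log_two_lt_d9]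

lemma U_pos_neg : ∃ z ∈ Ioo (1 / 100 : ℝ) (1 / 2),
    (∀ x ∈ Ioo 0 z, 0 < U x) ∧ ∀ x ∈ Ioo z (1 / 2), U x < 0 := by
  obtain ⟨hκ₁, hκ₂⟩ := κ_mem
  obtain ⟨m, hm, hAm⟩ := exists_A_eq
  have hm' : m ∈ Ioc 0 (1 / 2) := ⟨by linarith [hm.1], hm.2.le⟩
  have hcoef : 0 < 8 * κ - 4 := by linarith
  refine exists_pos_neg_of_deriv_neg_pos (fun x hx => hasDerivAt_U hx.1 (by linarith [hx.2]))
    ⟨by linarith [hm.1], hm.2⟩ (fun x hx => ?_) (fun x hx => ?_) ?_ (by norm_num) ?_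
  · have := A_strictAntiOn ⟨hx.1, by linarith [hx.2, hm.2]⟩ hm' hx.2
    rw [hAm, div_lt_iff₀ hcoef] at this
    linarith
  · have := A_strictAntiOn hm' ⟨by linarith [hx.1, hm.1], hx.2.le⟩ hx.1
    rw [hAm, lt_div_iff₀ hcoef] at this
    linarith
  · have hU := (hasDerivAt_U (p := 1 / 2) (by norm_num) (by norm_num)).continuousAt
    have hU_half : U (1 / 2) = 0 := by rw [U, L_half]; ring
    exact hU_half ▸ hU.tendsto.mono_left nhdsWithin_le_nhds
  · obtain ⟨h₄, h₅⟩ := log_ninety_nine_mem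
    rw [U, L_hundredth]
    nlinarith

lemma V_neg_pos : ∃ z ∈ Ioo (1 / 100 : ℝ) (1 / 2),
    (∀ x ∈ Ioo 0 z, V x < 0) ∧ ∀ x ∈ Ioo z (1 / 2), 0 < V x := by
  obtain ⟨hκ₁, hκ₂⟩ := κ_mem
  obtain ⟨m, hm, hU_pos, hU_neg⟩ := U_pos_neg
  have h := exists_pos_neg_of_deriv_neg_pos (f := fun x => -V x)
    (fun x hx => (hasDerivAt_V hx.1 (by linarith [hx.2])).neg)
    ⟨by linarith [hm.1], hm.2⟩ (fun x hx => ?_) (fun x hx => ?_) ?_ (x₀ := 1 / 100)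
    (by norm_num) ?_
  · obtain ⟨z, hz, hneg, hpos⟩ := h
    exact ⟨z, hz, fun x hx => neg_pos.1 (hneg x hx), fun x hx => neg_neg_iff_pos.1 (hpos x hx)⟩
  · have : 0 < (1 - 2 * x) * U x / (2 * (x * (1 - x))) :=
      div_pos (mul_pos (by linarith [hx.2, hm.2]) (hU_pos x hx))
        (mul_pos two_pos (mul_one_sub_pos hx.1 (by linarith [hx.2, hm.2])))
    linarith
  · have : (1 - 2 * x) * U x / (2 * (x * (1 - x))) < 0 :=
      div_neg_of_neg_of_pos (mul_neg_of_pos_of_neg (by linarith [hx.2]) (hU_neg x hx))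
        (mul_pos two_pos (mul_one_sub_pos (by linarith [hx.1, hm.1]) (by linarith [hx.2])))
    linarith
  · have hV := (hasDerivAt_V (p := 1 / 2) (by norm_num) (by norm_num)).continuousAt.neg
    have hV_half : -V (1 / 2) = 0 := by rw [V, L_half]; ring
    exact hV_half ▸ hV.tendsto.mono_left nhdsWithin_le_nhds
  · obtain ⟨h₄, h₅⟩ := log_ninety_nine_mem
    simp only [V, L_hundredth]
    nlinarith

lemma Ψ_eq {p : ℝ} (h₀ : 0 < p) (h₂ : p < 1 / 2) :
    Ψ p = log (2 * (1 - 2 * p) * (4 * p * (1 - p)) ^ (κ - 1)) - log (L p) := by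
  have hQ : 0 < 4 * p * (1 - p) := by nlinarith
  rw [Ψ, log_mul (by linarith) (rpow_pos_of_pos hQ _).ne', log_rpow hQ]
  ring

lemma Ψ_pos_iff {p : ℝ} (h₀ : 0 < p) (h₂ : p < 1 / 2) :
    0 < Ψ p ↔ L p < 2 * (1 - 2 * p) * (4 * p * (1 - p)) ^ (κ - 1) := by
  have hQ : 0 < 4 * p * (1 - p) := by nlinarith
  rw [Ψ_eq h₀ h₂, sub_pos,
    log_lt_log_iff (L_pos h₀ h₂) (mul_pos (by linarith) (rpow_pos_of_pos hQ _))]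

lemma Ψ_neg_iff {p : ℝ} (h₀ : 0 < p) (h₂ : p < 1 / 2) :
    Ψ p < 0 ↔ 2 * (1 - 2 * p) * (4 * p * (1 - p)) ^ (κ - 1) < L p := by
  have hQ : 0 < 4 * p * (1 - p) := by nlinarith
  rw [Ψ_eq h₀ h₂, sub_neg,
    log_lt_log_iff (mul_pos (by linarith) (rpow_pos_of_pos hQ _)) (L_pos h₀ h₂)]

/-- `L (1/2) = 0` and `L' (1/2) = -4` is also the derivative of `2 (1 - 2p)`, so the ratio of
the two tends to `1`. -/
lemma tendsto_Ψ_nhdsLT_half : Tendsto Ψ (𝓝[<] (1 / 2)) (𝓝 0) := by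
  have hslope : Tendsto (slope L (1 / 2)) (𝓝[≠] (1 / 2)) (𝓝 (-4)) := by
    have h := hasDerivAt_L (p := 1 / 2) (by norm_num) (by norm_num)
    norm_num at h
    exact hasDerivAt_iff_tendsto_slope.1 h
  have hratio : Tendsto (fun p => 2 * (1 - 2 * p) / L p) (𝓝[<] (1 / 2)) (𝓝 1) := by
    have h := (hslope.inv₀ (by norm_num)).const_mul (-4)
    norm_num at h
    refine (h.mono_left (nhdsWithin_mono _ fun x hx => ne_of_lt hx)).congr' ?_
    filter_upwards [self_mem_nhdsWithin] with p (hp : p < 1 / 2)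
    rw [slope_def_field, L_half, sub_zero, inv_div]
    field_simp [(by linarith : p - 1 / 2 ≠ 0)]
    ring
  have hQ : Tendsto (fun p : ℝ => log (4 * p * (1 - p))) (𝓝[<] (1 / 2)) (𝓝 0) := by
    have h : ContinuousAt (fun p : ℝ => log (4 * p * (1 - p))) (1 / 2) := by
      fun_prop (disch := norm_num)
    have h_half : log (4 * (1 / 2) * (1 - 1 / 2) : ℝ) = 0 := by norm_num
    exact h_half ▸ h.tendsto.mono_left nhdsWithin_le_nhds
  have h := ((continuousAt_log one_ne_zero).tendsto.comp hratio).sub (hQ.const_mul (1 - κ))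
  rw [log_one, mul_zero, sub_zero] at h
  refine h.congr' ?_
  filter_upwards [Ioo_mem_nhdsLT (by norm_num : (0 : ℝ) < 1 / 2)] with p hp
  rw [Function.comp_apply, log_div (by linarith [hp.2]) (L_pos hp.1 hp.2).ne', Ψ]

lemma exp_neg_sixty_le : exp (-60) ≤ 1 / 61 := by
  rw [exp_neg, one_div, inv_le_inv₀ (exp_pos _) (by norm_num)]
  linarith [add_one_le_exp (60 : ℝ)]

/-- `(4p(1-p))^(κ-1)` blows up like a power of `1/p`, while `L p` only grows like `log (1/p)`. -/
lemma Ψ_exp_neg_sixty_pos : 0 < Ψ (exp (-60)) := by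
  have hp := exp_neg_sixty_le
  set p := exp (-60)
  have h₀ : 0 < p := exp_pos _
  have hQ : 0 < 4 * p * (1 - p) := by nlinarith
  rw [Ψ_pos_iff h₀ (by linarith)]
  have hL : L p ≤ 60 := by
    rw [L, log_exp]
    linarith [log_nonpos (by linarith : 0 ≤ 1 - p) (by linarith)]
  have hlogQ : log (4 * p * (1 - p)) ≤ 3 - 60 := by
    rw [log_mul (by positivity) (by linarith), log_mul (by norm_num) h₀.ne', log_exp]
    linarith [log_nonpos (by linarith : 0 ≤ 1 - p) (by linarith),
      log_le_sub_one_of_pos (by norm_num : (0 : ℝ) < 4)]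
  have ht : 14 ≤ log (4 * p * (1 - p)) * (κ - 1) := by nlinarith [κ_mem.2]
  have hexp : 60 < (4 * p * (1 - p)) ^ (κ - 1) := by
    rw [rpow_def_of_pos hQ]
    nlinarith [quadratic_le_exp_of_nonneg (le_trans (by norm_num) ht)]
  nlinarith

lemma Ψ_pos_neg : ∃ z ∈ Ioo (0 : ℝ) (1 / 2),
    (∀ x ∈ Ioo 0 z, 0 < Ψ x) ∧ ∀ x ∈ Ioo z (1 / 2), Ψ x < 0 := by
  obtain ⟨m, hm, hV_neg, hV_pos⟩ := V_neg_pos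
  have hden : ∀ x ∈ Ioo (0 : ℝ) (1 / 2), 0 < (1 - 2 * x) * (x * (1 - x)) * L x := fun x hx =>
    mul_pos (mul_pos (by linarith [hx.2]) (mul_one_sub_pos hx.1 (by linarith [hx.2])))
      (L_pos hx.1 hx.2)
  obtain ⟨z, hz, h⟩ := exists_pos_neg_of_deriv_neg_pos (fun x hx => hasDerivAt_Ψ hx.1 hx.2)
    ⟨by linarith [hm.1], hm.2⟩
    (fun x hx => div_neg_of_neg_of_pos (hV_neg x hx) (hden x ⟨hx.1, hx.2.trans hm.2⟩))
    (fun x hx => div_pos (hV_pos x hx) (hden x ⟨by linarith [hx.1, hm.1], hx.2⟩))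
    tendsto_Ψ_nhdsLT_half ⟨exp_pos _, by linarith [exp_neg_sixty_le]⟩ Ψ_exp_neg_sixty_pos
  exact ⟨z, ⟨(exp_pos _).trans hz.1, hz.2⟩, h⟩

lemma F_nonneg {p : ℝ} (hp : p ∈ Icc (0 : ℝ) (1 / 2)) : 0 ≤ F p := by
  obtain ⟨z, hz, hΨ_pos, hΨ_neg⟩ := Ψ_pos_neg
  have hF : Continuous F := by
    unfold F
    exact continuous_const.mul ((continuous_rpow_const κ_pos.le).comp (by fun_prop)) |>.sub
      binEntropy_continuous
  refine nonneg_of_deriv_pos_neg hF.continuousOn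
    (fun x hx => hasDerivAt_F hx.1 (by linarith [hx.2])) (Ioo_subset_Icc_self hz)
    (fun x hx => sub_pos.2 ((Ψ_pos_iff hx.1 (hx.2.trans hz.2)).1 (hΨ_pos x hx)))
    (fun x hx => sub_neg.2 ((Ψ_neg_iff (hz.1.trans hx.1) hx.2).1 (hΨ_neg x hx))) ?_ ?_ p hp
  · simp [F, zero_rpow κ_pos.ne']
  · rw [F, one_div, binEntropy_two_inv]; norm_num

lemma binEntropy_le_log_two_mul_rpow {p : ℝ} (h₀ : 0 ≤ p) (h₁ : p ≤ 1) :
    binEntropy p ≤ log 2 * (4 * p * (1 - p)) ^ κ := by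
  rcases le_total p (1 / 2) with hp | hp
  · have := F_nonneg ⟨h₀, hp⟩
    rw [F] at this
    linarith
  · have := F_nonneg (p := 1 - p) ⟨by linarith, by linarith⟩
    rw [F, binEntropy_one_sub,
      show 4 * (1 - p) * (1 - (1 - p)) = 4 * p * (1 - p) by ring] at this
    linarith

end BinEntropyBound

theorem binary_entropy_le_rpow (p : ℝ) (hp0 : 0 ≤ p) (hp1 : p ≤ 1) :
    p * Real.logb 2 p⁻¹ + (1 - p) * Real.logb 2 (1 - p)⁻¹
      ≤ (4 * p * (1 - p)) ^ (1 / Real.log 4) := by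
  have h_bits : p * logb 2 p⁻¹ + (1 - p) * logb 2 (1 - p)⁻¹ = binEntropy p / log 2 := by
    rw [binEntropy, logb, logb]; ring
  rw [h_bits, div_le_iff₀ (log_pos one_lt_two), mul_comm]
  exact BinEntropyBound.binEntropy_le_log_two_mul_rpow hp0 hp1
end

section
/- Let A be a random variable on a finite set of size n with H(A | S = s) ≥ log n − γ − ε for a fixed conditioning event, let X be the indicator of the event A ∉ M for a subset M of size βn (β < 1), and let p = Pr(A ∉ M | S = s). If p ≥ 1 − log(1+β) − γ − ε > 0, then H(A | S = s, A ∉ M) ≥ log((1−β)n) − (γ+ε)/(1 − log(1+β) − γ − ε). -/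
/-!
Compare `p` with the distribution `r` that puts mass `1 / n` on each point of `M` (total `β`) and
is proportional to `p` on `Mᶜ` with total mass `1 - β`. Gibbs' inequality `H(p) ≤ -∑ p log r`
evaluates to `H(p) ≤ log n - q (log ((1 - β) n) - H(p | Mᶜ))` with `q = p(Mᶜ)`, so the entropy
hypothesis gives `q (log ((1 - β) n) - H(p | Mᶜ)) ≤ γ + ε`; dividing by `q`, which is at least
`1 - log (1 + β) - γ - ε`, yields the claim.
-/

open Finset

open Real

noncomputable def condEnt {α : Type*} (p : α → ℝ) (T : Finset α) : ℝ :=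
  -∑ i ∈ T, (p i / ∑ j ∈ T, p j) * logb 2 (p i / ∑ j ∈ T, p j)

lemma mul_logb_sub_mul_logb_le {a b : ℝ} (ha : 0 ≤ a) (hb : 0 ≤ b) (hab : b = 0 → a = 0) :
    a * logb 2 b - a * logb 2 a ≤ (b - a) / log 2 := by
  obtain rfl | ha := ha.eq_or_lt
  · simp only [zero_mul, sub_zero, sub_self]
    positivity
  have hb : 0 < b := hb.lt_of_ne' fun h => ha.ne' (hab h)
  calc a * logb 2 b - a * logb 2 a = a * log (b / a) / log 2 := by
        rw [log_div hb.ne' ha.ne', logb, logb]; ring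
    _ ≤ a * (b / a - 1) / log 2 := by gcongr; exact log_le_sub_one_of_pos (by positivity)
    _ = (b - a) / log 2 := by field_simp

theorem ent_le_neg_sum_mul_logb {α : Type*} [Fintype α] {p r : α → ℝ} (hp : ∀ i, 0 ≤ p i)
    (hr : ∀ i, 0 ≤ r i) (hpr : ∀ i, r i = 0 → p i = 0) (hsum : ∑ i, r i ≤ ∑ i, p i) :
    ent p ≤ -∑ i, p i * logb 2 (r i) := by
  have h := sum_le_sum fun i (_ : i ∈ univ) => mul_logb_sub_mul_logb_le (hp i) (hr i) (hpr i)
  rw [sum_sub_distrib, ← sum_div, sum_sub_distrib] at h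
  have hslack : (∑ i, r i - ∑ i, p i) / log 2 ≤ 0 :=
    div_nonpos_of_nonpos_of_nonneg (sub_nonpos.2 hsum) (log_nonneg one_le_two)
  rw [ent]
  linarith

lemma neg_sum_mul_logb_mul_div_sum {α : Type*} {p : α → ℝ} {T : Finset α}
    (hq : 0 < ∑ j ∈ T, p j) {d : ℝ} (hd : 0 < d) :
    -∑ i ∈ T, p i * logb 2 (d * (p i / ∑ j ∈ T, p j))
      = (∑ j ∈ T, p j) * (condEnt p T - logb 2 d) := by
  set q := ∑ j ∈ T, p j
  have hterm : ∀ i ∈ T, p i * logb 2 (d * (p i / q))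
      = q * ((p i / q) * logb 2 (p i / q)) + p i * logb 2 d := by
    intro i _
    by_cases hpi : p i = 0
    · simp [hpi]
    rw [logb_mul hd.ne' (div_ne_zero hpi hq.ne')]
    field_simp
    ring
  rw [sum_congr rfl hterm, sum_add_distrib, ← mul_sum, ← sum_mul, condEnt]
  ring

lemma cast_card_pos_of_sum_pos {α : Type*} [Fintype α] {p : α → ℝ} {s : Finset α}
    (hs : 0 < ∑ i ∈ s, p i) :
    (0 : ℝ) < Fintype.card α := by
  obtain ⟨i, -⟩ := nonempty_of_sum_ne_zero hs.ne'
  exact_mod_cast Fintype.card_pos_iff.2 ⟨i⟩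

section Rejection

variable {α : Type*} [Fintype α] [DecidableEq α] {p : α → ℝ} {M : Finset α} {β : ℝ}

noncomputable def rejectionRef (p : α → ℝ) (M : Finset α) (β : ℝ) : α → ℝ :=
  M.piecewise (fun _ => (Fintype.card α : ℝ)⁻¹) fun i => (1 - β) * (p i / ∑ j ∈ Mᶜ, p j)

lemma rejectionRef_of_mem {i : α} (hi : i ∈ M) :
    rejectionRef p M β i = (Fintype.card α : ℝ)⁻¹ :=
  piecewise_eq_of_mem _ _ _ hi

lemma rejectionRef_of_mem_compl {i : α} (hi : i ∈ Mᶜ) :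
    rejectionRef p M β i = (1 - β) * (p i / ∑ j ∈ Mᶜ, p j) :=
  piecewise_eq_of_notMem _ _ _ (mem_compl.1 hi)

lemma rejectionRef_nonneg (hp0 : ∀ i, 0 ≤ p i) (hβ1 : β ≤ 1) (i : α) :
    0 ≤ rejectionRef p M β i := by
  by_cases hiM : i ∈ M
  · rw [rejectionRef_of_mem hiM]
    positivity
  · rw [rejectionRef_of_mem_compl (mem_compl.2 hiM)]
    exact mul_nonneg (sub_nonneg.2 hβ1) (div_nonneg (hp0 i) (sum_nonneg fun j _ => hp0 j))

lemma eq_zero_of_rejectionRef_eq_zero (hβ1 : β < 1) (hq : 0 < ∑ j ∈ Mᶜ, p j) {i : α}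
    (hi : rejectionRef p M β i = 0) : p i = 0 := by
  by_cases hiM : i ∈ M
  · rw [rejectionRef_of_mem hiM, inv_eq_zero, Nat.cast_eq_zero] at hi
    exact absurd hi (card_ne_zero_of_mem (mem_univ i))
  · rw [rejectionRef_of_mem_compl (mem_compl.2 hiM)] at hi
    simpa [(sub_pos.2 hβ1).ne', hq.ne'] using hi

lemma sum_rejectionRef (hM : (M.card : ℝ) = β * Fintype.card α) (hq : 0 < ∑ j ∈ Mᶜ, p j) :
    ∑ i, rejectionRef p M β i = 1 := by
  have hn : (Fintype.card α : ℝ) ≠ 0 := (cast_card_pos_of_sum_pos hq).ne'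
  rw [← sum_add_sum_compl M, sum_congr rfl fun i => rejectionRef_of_mem,
    sum_congr rfl fun i => rejectionRef_of_mem_compl, sum_const, nsmul_eq_mul, hM, ← mul_sum,
    ← sum_div, div_self hq.ne']
  field_simp
  ring

lemma neg_sum_mul_logb_rejectionRef (hp1 : ∑ i, p i = 1) (hβ1 : β < 1)
    (hq : 0 < ∑ j ∈ Mᶜ, p j) :
    -∑ i, p i * logb 2 (rejectionRef p M β i)
      = logb 2 (Fintype.card α)
        - (∑ j ∈ Mᶜ, p j) * (logb 2 (1 - β) + logb 2 (Fintype.card α) - condEnt p Mᶜ) := by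
  have hmass : ∑ i ∈ M, p i = 1 - ∑ j ∈ Mᶜ, p j := by
    rw [← hp1, ← sum_add_sum_compl M]
    ring
  rw [← sum_add_sum_compl M, neg_add,
    sum_congr rfl fun i hi => congrArg (p i * logb 2 ·) (rejectionRef_of_mem hi),
    sum_congr rfl fun i hi => congrArg (p i * logb 2 ·) (rejectionRef_of_mem_compl hi),
    neg_sum_mul_logb_mul_div_sum hq (sub_pos.2 hβ1), ← sum_mul, hmass, logb_inv]
  ring

theorem ent_le_logb_card_sub (hp0 : ∀ i, 0 ≤ p i) (hp1 : ∑ i, p i = 1) (hβ1 : β < 1)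
    (hM : (M.card : ℝ) = β * Fintype.card α) (hq : 0 < ∑ i ∈ Mᶜ, p i) :
    ent p ≤ logb 2 (Fintype.card α)
      - (∑ i ∈ Mᶜ, p i) * (logb 2 ((1 - β) * Fintype.card α) - condEnt p Mᶜ) := by
  rw [logb_mul (sub_pos.2 hβ1).ne' (cast_card_pos_of_sum_pos hq).ne',
    ← neg_sum_mul_logb_rejectionRef hp1 hβ1 hq]
  exact ent_le_neg_sum_mul_logb hp0 (rejectionRef_nonneg hp0 hβ1.le)
    (fun i => eq_zero_of_rejectionRef_eq_zero hβ1 hq) (by rw [sum_rejectionRef hM hq, hp1])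

end Rejection

theorem entropy_after_rejection_general {α : Type*} [Fintype α] [DecidableEq α] (p : α → ℝ)
    (hp0 : ∀ i, 0 ≤ p i) (hp1 : ∑ i, p i = 1)
    (β γ ε : ℝ) (hβ1 : β < 1) (hγ : 0 ≤ γ) (hε : 0 < ε)
    (hent : Real.logb 2 (Fintype.card α) - γ - ε ≤ ent p)
    (M : Finset α) (hM : (M.card : ℝ) = β * Fintype.card α)
    (hpos : 0 < 1 - Real.logb 2 (1 + β) - γ - ε)
    (hP : 1 - Real.logb 2 (1 + β) - γ - ε ≤ ∑ i ∈ Mᶜ, p i) :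
    Real.logb 2 ((1 - β) * Fintype.card α)
        - (γ + ε) / (1 - Real.logb 2 (1 + β) - γ - ε)
      ≤ -∑ i ∈ Mᶜ, (p i / ∑ j ∈ Mᶜ, p j) * Real.logb 2 (p i / ∑ j ∈ Mᶜ, p j) := by
  change _ ≤ condEnt p Mᶜ
  set q := ∑ i ∈ Mᶜ, p i
  have hq : 0 < q := hpos.trans_le hP
  have hdeficit : q * (logb 2 ((1 - β) * Fintype.card α) - condEnt p Mᶜ) ≤ γ + ε := by
    linarith [ent_le_logb_card_sub hp0 hp1 hβ1 hM hq]
  have hdiv : logb 2 ((1 - β) * Fintype.card α) - condEnt p Mᶜ ≤ (γ + ε) / q :=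
    (le_div_iff₀' hq).2 hdeficit
  have hmono : (γ + ε) / q ≤ (γ + ε) / (1 - logb 2 (1 + β) - γ - ε) :=
    div_le_div_of_nonneg_left (by linarith) hpos hP
  linarith

theorem entropy_after_rejection {α : Type*} [Fintype α] [DecidableEq α] (p : α → ℝ)
    (hp0 : ∀ i, 0 ≤ p i) (hp1 : ∑ i, p i = 1)
    (β γ ε : ℝ) (hβ0 : 0 < β) (hβ1 : β < 1) (hγ : 0 ≤ γ) (hε : 0 < ε)
    (hent : Real.logb 2 (Fintype.card α) - γ - ε ≤ ent p)
    (M : Finset α) (hM : (M.card : ℝ) = β * Fintype.card α)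
    (hpos : 0 < 1 - Real.logb 2 (1 + β) - γ - ε)
    (hP : 1 - Real.logb 2 (1 + β) - γ - ε ≤ ∑ i ∈ Mᶜ, p i) :
    Real.logb 2 ((1 - β) * Fintype.card α)
        - (γ + ε) / (1 - Real.logb 2 (1 + β) - γ - ε)
      ≤ -∑ i ∈ Mᶜ, (p i / ∑ j ∈ Mᶜ, p j) * Real.logb 2 (p i / ∑ j ∈ Mᶜ, p j) :=
  entropy_after_rejection_general p hp0 hp1 β γ ε hβ1 hγ hε hent M hM hpos hP
end
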